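/- arXiv:1405.0925 — 3 statements merged into one kernel-verified Lean document; each statement's English description precedes it below -/
import Mathlib

section
/- Let F be a differential field, A the companion matrix with last row (a_1,...,a_{l+1}) and 1's on the superdiagonal, and f ∈ F^× with ∂(f)/f = a_{l+1}. Let B_1 = diag(1,...,1,1/f). Then the gauge transform B_1 A B_1^{−1} + ∂(B_1)B_1^{−1} has trace zero, i.e., lies in sl_{l+1}(F); explicitly it has 1's on the superdiagonal except entry f in position (l, l+1), last row (a_1/f,...,a_l/f, 0), and 0 elsewhere. -/
open Matrix

/-- Entrywise application of a derivation to a matrix. -/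
def matD {n : ℕ} {F : Type*} (D : F → F) (M : Matrix (Fin n) (Fin n) F) :
    Matrix (Fin n) (Fin n) F :=
  Matrix.of fun i j => D (M i j)

/-- The companion matrix with `1`'s on the superdiagonal and last row `(a_1, …, a_{l+1})`. -/
def compMat (l : ℕ) {F : Type*} [Field F] (a : Fin (l + 1) → F) :
    Matrix (Fin (l + 1)) (Fin (l + 1)) F :=
  Matrix.of fun i j => if (i : ℕ) + 1 = (j : ℕ) then 1 else if (i : ℕ) = l then a j else 0

/-- Gauge transformation of `A` by `B`: `B A B⁻¹ + ∂(B)B⁻¹`. -/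
noncomputable def gaugeT {n : ℕ} {F : Type*} [Field F] (D : F → F)
    (B A : Matrix (Fin n) (Fin n) F) : Matrix (Fin n) (Fin n) F :=
  B * A * B⁻¹ + matD D B * B⁻¹

/-!
Conjugating by `diag(d)` multiplies the entry `(i, j)` by `dᵢ / dⱼ`, and `∂(diag d) diag(d)⁻¹` is
the diagonal of logarithmic derivatives `∂dᵢ / dᵢ`. For `d = (1, …, 1, 1/f)` the only nonzero
logarithmic derivative is `∂(1/f) / (1/f) = -∂f / f = -a_{l+1}`, which cancels the corner entry
`a_{l+1}` of the companion matrix; every other diagonal entry was already zero.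
-/

section Leibniz

variable {F : Type*} [Field F] {D : F → F} (hmul : ∀ a b : F, D (a * b) = D a * b + a * D b)
include hmul

theorem map_zero_of_leibniz : D 0 = 0 := by
  simpa using hmul 0 0

theorem map_one_of_leibniz : D 1 = 0 := by
  simpa using hmul 1 1

theorem logDeriv_inv_of_leibniz {f : F} (hf : f ≠ 0) : D f⁻¹ / f⁻¹ = -(D f / f) := by
  have h := hmul f f⁻¹
  rw [mul_inv_cancel₀ hf, map_one_of_leibniz hmul] at h
  rw [div_inv_eq_mul]
  linear_combination -h

end Leibniz

section Diagonal

variable {n : ℕ} {F : Type*} [Field F] {D : F → F}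

theorem matD_diagonal (hD0 : D 0 = 0) (d : Fin n → F) :
    matD D (diagonal d) = diagonal fun i => D (d i) := by
  ext i j
  by_cases h : i = j <;> simp [matD, diagonal_apply, h, hD0]

theorem inv_diagonal_of_ne_zero {d : Fin n → F} (hd : ∀ i, d i ≠ 0) :
    (diagonal d)⁻¹ = diagonal d⁻¹ :=
  inv_eq_right_inv (by rw [diagonal_mul_diagonal]; simp [hd])

theorem gaugeT_diagonal (hD0 : D 0 = 0) {d : Fin n → F} (hd : ∀ i, d i ≠ 0)
    (A : Matrix (Fin n) (Fin n) F) :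
    gaugeT D (diagonal d) A =
      of fun i j => d i * A i j / d j + if i = j then D (d i) / d i else 0 := by
  ext i j
  by_cases h : i = j <;>
    simp [gaugeT, matD_diagonal hD0, inv_diagonal_of_ne_zero hd, h, div_eq_mul_inv]

end Diagonal

theorem gaugeT_compMat_diagonal {l : ℕ} {F : Type*} [Field F] {D : F → F}
    (hmul : ∀ a b : F, D (a * b) = D a * b + a * D b)
    (a : Fin (l + 1) → F) {f : F} (hf : f ≠ 0) (hfa : D f / f = a (Fin.last l)) :
    gaugeT D (diagonal fun i => if i = Fin.last l then f⁻¹ else 1) (compMat l a) =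
      of (fun i j : Fin (l + 1) =>
        if (i : ℕ) + 1 = (j : ℕ) then (if (j : ℕ) = l then f else 1)
        else if (i : ℕ) = l ∧ (j : ℕ) < l then a j / f else 0) := by
  have hd : ∀ i, (if i = Fin.last l then f⁻¹ else 1) ≠ 0 := fun i => by
    split_ifs <;> simp [hf]
  rw [gaugeT_diagonal (map_zero_of_leibniz hmul) hd]
  ext i j
  simp only [of_apply, compMat]
  rcases eq_or_ne i (Fin.last l) with rfl | hi
  · rcases eq_or_ne j (Fin.last l) with rfl | hj
    · simp [logDeriv_inv_of_leibniz hmul hf, hfa]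
      field_simp
      ring
    · have hjl : (j : ℕ) < l := Fin.val_lt_last hj
      simp [hj.symm, hj, hjl, show l + 1 ≠ j by omega, div_eq_inv_mul]
  · have hil : (i : ℕ) ≠ l := Fin.val_ne_iff.mpr hi
    by_cases hsup : (i : ℕ) + 1 = j
    · have hij : i ≠ j := Fin.ne_of_val_ne (by omega)
      rcases eq_or_ne j (Fin.last l) with rfl | hj
      · simp [hi, hsup]
      · have hjl : (j : ℕ) ≠ l := Fin.val_ne_iff.mpr hj
        simp [hi, hsup, hij, hj, hjl]
    · rcases eq_or_ne i j with rfl | hij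
      · simp [hi, hil, map_one_of_leibniz hmul]
      · simp [hi, hil, hsup, hij]

theorem gauge_companion_by_diag_general (l : ℕ) (F : Type*) [Field F] (D : F → F)
    (hmul : ∀ a b : F, D (a * b) = D a * b + a * D b)
    (a : Fin (l + 1) → F) (f : F) (hf : f ≠ 0) (hfa : D f / f = a (Fin.last l)) :
    (gaugeT D (Matrix.diagonal fun i => if i = Fin.last l then f⁻¹ else 1)
        (compMat l a)).trace = 0 ∧
    gaugeT D (Matrix.diagonal fun i => if i = Fin.last l then f⁻¹ else 1) (compMat l a) =
      Matrix.of (fun i j : Fin (l + 1) =>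
        if (i : ℕ) + 1 = (j : ℕ) then (if (j : ℕ) = l then f else 1)
        else if (i : ℕ) = l ∧ (j : ℕ) < l then a j / f else 0) := by
  have hgauge := gaugeT_compMat_diagonal hmul a hf hfa
  refine ⟨?_, hgauge⟩
  rw [hgauge]
  exact Finset.sum_eq_zero fun i _ => by simp +contextual

/-- for the companion matrix `A` with last row `(a_1, …, a_{l+1})` and
`f ∈ F^×` with `∂(f)/f = a_{l+1}`, the gauge transform of `A` by `B₁ = diag(1, …, 1, 1/f)`
has trace zero, i.e. lies in `sl_{l+1}(F)`; explicitly it has `1`'s on the superdiagonal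
except for entry `f` in position `(l, l+1)`, last row `(a_1/f, …, a_l/f, 0)`, and `0`
elsewhere. -/
theorem gauge_companion_by_diag (l : ℕ) (F : Type*) [Field F] (D : F → F)
    (hadd : ∀ a b : F, D (a + b) = D a + D b)
    (hmul : ∀ a b : F, D (a * b) = D a * b + a * D b)
    (a : Fin (l + 1) → F) (f : F) (hf : f ≠ 0) (hfa : D f / f = a (Fin.last l)) :
    (gaugeT D (Matrix.diagonal fun i => if i = Fin.last l then f⁻¹ else 1)
        (compMat l a)).trace = 0 ∧
    gaugeT D (Matrix.diagonal fun i => if i = Fin.last l then f⁻¹ else 1) (compMat l a) =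
      Matrix.of (fun i j : Fin (l + 1) =>
        if (i : ℕ) + 1 = (j : ℕ) then (if (j : ℕ) = l then f else 1)
        else if (i : ℕ) = l ∧ (j : ℕ) < l then a j / f else 0) :=
  gauge_companion_by_diag_general l F D hmul a f hf hfa
end

section
/- Let F be a differential field and A ∈ A_Δ + H(F) ⊕ ⊕_{δ ∈ Φ⁻} g_δ(F) in sl_{l+1}(F), where A_Δ = Σ_{i=1}^l E_{i,i+1}, H(F) is the diagonal trace-zero part, and the negative root spaces span the strictly lower triangular matrices. Then there exists a lower unitriangular matrix U ∈ SL_{l+1}(F) such that U A U^{−1} + ∂(U)U^{−1} has zero diagonal, i.e., lies in A_Δ + (strictly lower triangular matrices over F). -/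
open Matrix

/-!
Let `σᵢ` be the sum of the first `i` diagonal entries of `A`, so that `σ₀ = 0` and
`σₗ₊₁ = tr A = 0`, and let `U = diagonalGauge A` be lower unitriangular with `σᵢ` in position
`(i, i - 1)`. With `A_Δ = superdiagOnes`, the matrix `U A + ∂U - A_Δ U` vanishes on and above
the diagonal: there the entries of `U` are `0` or `1`, so `∂U` vanishes, and on the diagonal
`U A` contributes `aᵢᵢ + σᵢ` while `A_Δ U` contributes `σᵢ₊₁`. Multiplying on the right by the
lower triangular `U⁻¹` preserves this vanishing, so the gauge transform `U A U⁻¹ + ∂U U⁻¹`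
agrees with `A_Δ` on and above the diagonal.
-/

def superdiagOnes (n : ℕ) (R : Type*) [Zero R] [One R] : Matrix (Fin n) (Fin n) R :=
  of fun i j => if (i : ℕ) + 1 = j then 1 else 0

section

variable {R : Type*} [CommRing R]

theorem leibniz_map_zero {D : R → R} (hmul : ∀ a b, D (a * b) = D a * b + a * D b) :
    D 0 = 0 := by
  simpa using hmul 0 0

theorem leibniz_map_one {D : R → R} (hmul : ∀ a b, D (a * b) = D a * b + a * D b) :
    D 1 = 0 := by
  simpa using hmul 1 1

theorem Fin.sum_ite_val_eq {n : ℕ} (f : Fin n → R) (m : ℕ) :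
    ∑ k : Fin n, (if (k : ℕ) = m then f k else 0) = if h : m < n then f ⟨m, h⟩ else 0 := by
  split_ifs with h
  · simp [← Fin.ext_iff (b := ⟨m, h⟩)]
  · exact Finset.sum_eq_zero fun k _ => if_neg (by omega)

section Triangular

variable {ι : Type*} [Fintype ι] [LinearOrder ι]

theorem Matrix.mul_apply_eq_zero_of_strictLower_of_isLowerTriangular {X Y : Matrix ι ι R}
    (hX : ∀ i k, i ≤ k → X i k = 0) (hY : Y.IsLowerTriangular) {i j : ι} (hij : i ≤ j) :
    (X * Y) i j = 0 :=
  Finset.sum_eq_zero fun k _ => by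
    change X i k * Y k j = 0
    rcases le_or_gt i k with hik | hki
    · rw [hX i k hik, zero_mul]
    · rw [hY (show OrderDual.toDual j < OrderDual.toDual k from hki.trans_le hij), mul_zero]

theorem gauge_apply_of_le {U A S M : Matrix ι ι R} (hU : U.IsLowerTriangular)
    (hdet : IsUnit U.det) (h : ∀ i j, i ≤ j → (U * A + M - S * U) i j = 0) {i j : ι}
    (hij : i ≤ j) : (U * A * U⁻¹ + M * U⁻¹) i j = S i j := by
  have : Invertible U := invertibleOfIsUnitDet U hdet
  have hfactor : U * A * U⁻¹ + M * U⁻¹ - S = (U * A + M - S * U) * U⁻¹ := by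
    rw [sub_mul, add_mul, Matrix.mul_assoc S, mul_nonsing_inv U hdet, Matrix.mul_one]
  rw [← sub_eq_zero, ← Matrix.sub_apply, hfactor]
  exact mul_apply_eq_zero_of_strictLower_of_isLowerTriangular h
    (blockTriangular_inv_of_blockTriangular hU) hij

end Triangular

section DiagonalGauge

variable {n : ℕ} (A : Matrix (Fin n) (Fin n) R)

def diagPrefixSum (m : ℕ) : R :=
  ∑ k : Fin n, if (k : ℕ) < m then A k k else 0

@[simp]
theorem diagPrefixSum_zero : diagPrefixSum A 0 = 0 := by
  simp [diagPrefixSum]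

theorem diagPrefixSum_succ (i : Fin n) :
    diagPrefixSum A (i + 1) = diagPrefixSum A i + A i i := by
  have hAii : A i i = ∑ k, if k = i then A k k else 0 := by simp
  rw [diagPrefixSum, diagPrefixSum, hAii, ← Finset.sum_add_distrib]
  refine Finset.sum_congr rfl fun k _ => ?_
  simp only [Fin.ext_iff]
  split_ifs <;> first | omega | simp

theorem diagPrefixSum_self : diagPrefixSum A n = A.trace := by
  simp [diagPrefixSum, trace]

def diagonalGauge : Matrix (Fin n) (Fin n) R :=
  of fun i j => if i = j then 1 else if (j : ℕ) + 1 = i then diagPrefixSum A i else 0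

@[simp]
theorem diagonalGauge_apply_self (i : Fin n) : diagonalGauge A i i = 1 := by
  simp [diagonalGauge]

theorem diagonalGauge_apply_of_lt {i j : Fin n} (hij : i < j) : diagonalGauge A i j = 0 := by
  simp [diagonalGauge, hij.ne, show (j : ℕ) + 1 ≠ i by omega]

theorem diagonalGauge_isLowerTriangular : (diagonalGauge A).IsLowerTriangular :=
  fun _ _ h => diagonalGauge_apply_of_lt A h

theorem det_diagonalGauge : (diagonalGauge A).det = 1 := by
  simp [det_of_isLowerTriangular _ (diagonalGauge_isLowerTriangular A)]

theorem matD_diagonalGauge_apply_of_le {D : R → R} (hD0 : D 0 = 0) (hD1 : D 1 = 0)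
    {i j : Fin n} (hij : i ≤ j) : matD D (diagonalGauge A) i j = 0 := by
  rcases hij.eq_or_lt with rfl | hij
  · simp [matD, hD1]
  · simp [matD, diagonalGauge_apply_of_lt A hij, hD0]

theorem diagonalGauge_mul_apply_of_le (hA : ∀ i j : Fin n, i < j → A i j = superdiagOnes n R i j)
    {i j : Fin n} (hij : i ≤ j) :
    (diagonalGauge A * A) i j = A i j + if i = j then diagPrefixSum A i else 0 := by
  have hterm : ∀ k, diagonalGauge A i k * A k j = (if k = i then A i j else 0) +
      if (k : ℕ) = i - 1 then (if i = j then diagPrefixSum A i else 0) else 0 := by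
    intro k
    by_cases hki : k = i
    · subst hki
      by_cases h0 : (k : ℕ) = 0
      · simp [h0]
      · simp [show (k : ℕ) ≠ k - 1 by omega]
    by_cases hsub : (k : ℕ) + 1 = i
    · have hAkj : A k j = if i = j then 1 else 0 := by
        rw [hA k j (by rw [Fin.lt_def]; omega)]
        simp only [superdiagOnes, of_apply, hsub, Fin.ext_iff]
      simp [diagonalGauge, hki, Ne.symm hki, hAkj, show (k : ℕ) = i - 1 by omega,
        show (i : ℕ) - 1 + 1 = i by omega]
    · have hk : (k : ℕ) ≠ i - 1 := fun h => hki (Fin.ext (by omega))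
      simp [diagonalGauge, hki, Ne.symm hki, hsub, hk]
  rw [mul_apply, Finset.sum_congr rfl fun k _ => hterm k, Finset.sum_add_distrib,
    Finset.sum_ite_eq', Fin.sum_ite_val_eq, dif_pos (by omega)]
  simp

theorem superdiagOnes_mul_diagonalGauge_apply_of_le (htrace : A.trace = 0) {i j : Fin n}
    (hij : i ≤ j) : (superdiagOnes n R * diagonalGauge A) i j =
      superdiagOnes n R i j + if i = j then diagPrefixSum A (i + 1) else 0 := by
  have hterm : ∀ k, superdiagOnes n R i k * diagonalGauge A k j =
      if (k : ℕ) = i + 1 then diagonalGauge A k j else 0 := by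
    simp [superdiagOnes, eq_comm]
  rw [mul_apply, Finset.sum_congr rfl fun k _ => hterm k, Fin.sum_ite_val_eq]
  by_cases hlt : (i : ℕ) + 1 < n
  · rw [dif_pos hlt]
    simp only [diagonalGauge, superdiagOnes, of_apply, Fin.ext_iff]
    split_ifs <;> first | omega | simp
  · obtain rfl : i = j := Fin.ext (by rw [Fin.le_def] at hij; omega)
    have hlast : (i : ℕ) + 1 = n := by omega
    rw [hlast, diagPrefixSum_self, htrace]
    simp [superdiagOnes]

theorem gauge_sub_superdiagOnes_apply_of_le
    (hA : ∀ i j : Fin n, i < j → A i j = superdiagOnes n R i j) (htrace : A.trace = 0)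
    {D : R → R} (hD0 : D 0 = 0) (hD1 : D 1 = 0) {i j : Fin n} (hij : i ≤ j) :
    (diagonalGauge A * A + matD D (diagonalGauge A) - superdiagOnes n R * diagonalGauge A) i j
      = 0 := by
  rw [Matrix.sub_apply, Matrix.add_apply, diagonalGauge_mul_apply_of_le A hA hij,
    matD_diagonalGauge_apply_of_le A hD0 hD1 hij,
    superdiagOnes_mul_diagonalGauge_apply_of_le A htrace hij]
  rcases hij.eq_or_lt with rfl | hlt
  · simp [superdiagOnes, diagPrefixSum_succ, add_comm]
  · simp [hA i j hlt, hlt.ne]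

end DiagonalGauge

end

theorem gauge_remove_diagonal_general (l : ℕ) (F : Type*) [Field F] (D : F → F)
    (hmul : ∀ a b : F, D (a * b) = D a * b + a * D b)
    (A : Matrix (Fin (l + 1)) (Fin (l + 1)) F)
    (hupper : ∀ i j : Fin (l + 1), (i : ℕ) < (j : ℕ) →
      A i j = if (i : ℕ) + 1 = (j : ℕ) then 1 else 0)
    (htrace : A.trace = 0) :
    ∃ U : Matrix (Fin (l + 1)) (Fin (l + 1)) F,
      (∀ i j : Fin (l + 1), (i : ℕ) < (j : ℕ) → U i j = 0) ∧ (∀ i, U i i = 1) ∧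
      U.det = 1 ∧
      (∀ i, (U * A * U⁻¹ + matD D U * U⁻¹) i i = 0) ∧
      (∀ i j : Fin (l + 1), (i : ℕ) < (j : ℕ) →
        (U * A * U⁻¹ + matD D U * U⁻¹) i j = if (i : ℕ) + 1 = (j : ℕ) then 1 else 0) := by
  have hgauge : ∀ i j, i ≤ j → (diagonalGauge A * A * (diagonalGauge A)⁻¹ +
      matD D (diagonalGauge A) * (diagonalGauge A)⁻¹) i j = superdiagOnes (l + 1) F i j :=
    fun i j => gauge_apply_of_le (diagonalGauge_isLowerTriangular A)
      (by simp [det_diagonalGauge])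
      (fun _ _ => gauge_sub_superdiagOnes_apply_of_le A hupper htrace
        (leibniz_map_zero hmul) (leibniz_map_one hmul))
  refine ⟨diagonalGauge A, fun i j => diagonalGauge_apply_of_lt A, diagonalGauge_apply_self A,
    det_diagonalGauge A, fun i => ?_, fun i j hij => hgauge i j hij.le⟩
  simp [hgauge i i le_rfl, superdiagOnes]

/-- let `A ∈ A_Δ + H(F) ⊕ ⊕_{δ ∈ Φ⁻} g_δ(F)` in `sl_{l+1}(F)`, i.e. `A` has
`1`'s on the superdiagonal, `0` elsewhere above the diagonal, and trace-zero diagonal part.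
Then there is a lower unitriangular `U ∈ SL_{l+1}(F)` such that the gauge transform
`U A U⁻¹ + ∂(U)U⁻¹` has zero diagonal, i.e. lies in `A_Δ +` (strictly lower triangular
matrices over `F`). -/
theorem gauge_remove_diagonal (l : ℕ) (F : Type*) [Field F] (D : F → F)
    (hadd : ∀ a b : F, D (a + b) = D a + D b)
    (hmul : ∀ a b : F, D (a * b) = D a * b + a * D b)
    (A : Matrix (Fin (l + 1)) (Fin (l + 1)) F)
    (hupper : ∀ i j : Fin (l + 1), (i : ℕ) < (j : ℕ) →
      A i j = if (i : ℕ) + 1 = (j : ℕ) then 1 else 0)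
    (htrace : A.trace = 0) :
    ∃ U : Matrix (Fin (l + 1)) (Fin (l + 1)) F,
      (∀ i j : Fin (l + 1), (i : ℕ) < (j : ℕ) → U i j = 0) ∧ (∀ i, U i i = 1) ∧
      U.det = 1 ∧
      (∀ i, (U * A * U⁻¹ + matD D U * U⁻¹) i i = 0) ∧
      (∀ i j : Fin (l + 1), (i : ℕ) < (j : ℕ) →
        (U * A * U⁻¹ + matD D U * U⁻¹) i j = if (i : ℕ) + 1 = (j : ℕ) then 1 else 0) :=
  gauge_remove_diagonal_general l F D hmul A hupper htrace
end

section
/- Let F be a differential field with constants C. Every matrix A ∈ M_{l+1}(F) of the form A_Δ + h + N, where A_Δ has 1's on the superdiagonal, h is diagonal with trace zero, and N is strictly lower triangular, is gauge equivalent over GL_{l+1}(F) to a trace-zero companion matrix with last row (f_1,...,f_l, 0) for some f_1,...,f_l ∈ F. -/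
/-!
Gauge by the matrix `B` whose rows are `r₀ = e₀` and `r_{k+1} = r_k A + ∂r_k`. Row `i` of the
gauge transform `(BA + ∂B)B⁻¹` is then row `i + 1` of `B` times `B⁻¹`, i.e. `e_{i+1}`, for
every row but the last. Because `A` has `1`'s on the superdiagonal and zeros above it, `B` is lower
unitriangular, so `∂B` is strictly lower triangular and `∂B · B⁻¹` has trace zero; hence the
transform has trace `tr A = 0`, which forces its last diagonal entry to vanish.
-/

open Matrix

/-- The trace-zero companion matrix with last row `(f_1, …, f_l, 0)`, `1`'s on the
superdiagonal and `0` elsewhere. -/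
def compMat0 (l : ℕ) {F : Type*} [Field F] (f : Fin l → F) :
    Matrix (Fin (l + 1)) (Fin (l + 1)) F :=
  Matrix.of fun i j =>
    if (i : ℕ) + 1 = (j : ℕ) then 1
    else if h : (i : ℕ) = l ∧ (j : ℕ) < l then f ⟨j, h.2⟩ else 0

theorem Matrix.trace_mul_eq_zero_of_isLowerTriangular {ι R : Type*} [Fintype ι] [LinearOrder ι]
    [NonUnitalNonAssocSemiring R] {M N : Matrix ι ι R} (hM : ∀ i j, i ≤ j → M i j = 0)
    (hN : N.IsLowerTriangular) : trace (M * N) = 0 := by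
  refine Finset.sum_eq_zero fun i _ => Finset.sum_eq_zero fun k _ => ?_
  dsimp only
  rcases le_or_gt i k with hik | hki
  · rw [hM i k hik, zero_mul]
  · rw [hN (show OrderDual.toDual i < OrderDual.toDual k from hki), mul_zero]

theorem eq_compMat0_of_trace_eq_zero {F : Type*} [Field F] {l : ℕ}
    {C : Matrix (Fin (l + 1)) (Fin (l + 1)) F}
    (hrows : ∀ i j : Fin (l + 1), (i : ℕ) < l → C i j = if (i : ℕ) + 1 = j then 1 else 0)
    (htr : trace C = 0) :
    C = compMat0 l fun j => C (Fin.last l) j.castSucc := by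
  have hlast : C (Fin.last l) (Fin.last l) = 0 := by
    have hdiag : ∀ i : Fin l, C i.castSucc i.castSucc = 0 := fun i => by
      rw [hrows _ _ i.isLt, if_neg (by simp)]
    simpa [trace, Fin.sum_univ_castSucc, hdiag] using htr
  ext i j
  induction i using Fin.lastCases with
  | cast i =>
    rw [hrows _ _ i.isLt, compMat0, of_apply]
    simp only [Fin.val_castSucc]
    split_ifs <;> first | rfl | omega
  | last =>
    induction j using Fin.lastCases with
    | cast j => simp [compMat0]; omega
    | last => simp [compMat0, hlast]

section GaugeMatrix

variable {R : Type*} {n : ℕ} (D : R → R) (A : Matrix (Fin (n + 1)) (Fin (n + 1)) R)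

section Semiring

variable [Semiring R]

def gaugeRow : ℕ → Fin (n + 1) → R
  | 0 => Pi.single 0 1
  | k + 1 => gaugeRow k ᵥ* A + fun j => D (gaugeRow k j)

def gaugeMatrix : Matrix (Fin (n + 1)) (Fin (n + 1)) R :=
  of fun i j => gaugeRow D A i j

variable {D A}

theorem gaugeRow_eq_zero_of_lt (hD : D 0 = 0)
    (hA : ∀ i j : Fin (n + 1), (i : ℕ) + 1 < j → A i j = 0) :
    ∀ (k : ℕ) (j : Fin (n + 1)), k < j → gaugeRow D A k j = 0
  | 0, j, hj => Pi.single_eq_of_ne (Fin.pos_iff_ne_zero.mp hj) _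
  | k + 1, j, hj => by
    have hterm : ∀ m, gaugeRow D A k m * A m j = 0 := fun m => by
      rcases lt_or_ge k m with hkm | hmk
      · rw [gaugeRow_eq_zero_of_lt hD hA k m hkm, zero_mul]
      · rw [hA m j (by omega), mul_zero]
    simp only [gaugeRow, Pi.add_apply, vecMul, dotProduct, hterm, Finset.sum_const_zero,
      gaugeRow_eq_zero_of_lt hD hA k j (by omega), hD, add_zero]

theorem gaugeRow_self (hD : D 0 = 0)
    (hA₀ : ∀ i j : Fin (n + 1), (i : ℕ) + 1 < j → A i j = 0)
    (hA₁ : ∀ i j : Fin (n + 1), (i : ℕ) + 1 = j → A i j = 1) :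
    ∀ (k : ℕ) (j : Fin (n + 1)), (j : ℕ) = k → gaugeRow D A k j = 1
  | 0, j, hj => by
    obtain rfl : j = 0 := Fin.ext hj
    exact Pi.single_eq_same _ _
  | k + 1, j, hj => by
    have hk : k < n + 1 := by omega
    have hsum : (gaugeRow D A k ᵥ* A) j = 1 := by
      rw [vecMul, dotProduct, Finset.sum_eq_single ⟨k, hk⟩]
      · rw [gaugeRow_self hD hA₀ hA₁ k _ rfl, hA₁ _ _ (by simp [hj]), one_mul]
      · intro m _ hm
        rcases lt_or_ge k m with hkm | hmk
        · rw [gaugeRow_eq_zero_of_lt hD hA₀ k m hkm, zero_mul]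
        · rw [hA₀ m j (by have : (m : ℕ) ≠ k := fun h => hm (Fin.ext h); omega), mul_zero]
      · simp
    simp only [gaugeRow, Pi.add_apply, hsum, gaugeRow_eq_zero_of_lt hD hA₀ k j (by omega), hD,
      add_zero]

theorem isLowerTriangular_gaugeMatrix (hD : D 0 = 0)
    (hA₀ : ∀ i j : Fin (n + 1), (i : ℕ) + 1 < j → A i j = 0) :
    (gaugeMatrix D A).IsLowerTriangular :=
  fun i j hij => gaugeRow_eq_zero_of_lt hD hA₀ i j hij

end Semiring

variable [CommRing R] {D A}

theorem det_gaugeMatrix (hD : D 0 = 0)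
    (hA₀ : ∀ i j : Fin (n + 1), (i : ℕ) + 1 < j → A i j = 0)
    (hA₁ : ∀ i j : Fin (n + 1), (i : ℕ) + 1 = j → A i j = 1) :
    (gaugeMatrix D A).det = 1 := by
  rw [det_of_isLowerTriangular _ (isLowerTriangular_gaugeMatrix hD hA₀)]
  exact Finset.prod_eq_one fun i _ => gaugeRow_self hD hA₀ hA₁ i i rfl

theorem gaugeMatrix_mul_add_matD_mul_inv_apply_of_lt (hB : IsUnit (gaugeMatrix D A).det)
    (i j : Fin (n + 1)) (hi : (i : ℕ) < n) :
    ((gaugeMatrix D A * A + matD D (gaugeMatrix D A)) * (gaugeMatrix D A)⁻¹) i j =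
      if (i : ℕ) + 1 = j then 1 else 0 := by
  have hrow : (gaugeMatrix D A * A + matD D (gaugeMatrix D A)) i =
      gaugeMatrix D A ⟨i + 1, by omega⟩ := rfl
  rw [mul_apply', hrow, ← mul_apply', mul_nonsing_inv _ hB, one_apply]
  simp only [Fin.ext_iff]

theorem trace_matD_gaugeMatrix_mul_inv (hD₀ : D 0 = 0) (hD₁ : D 1 = 0)
    (hA₀ : ∀ i j : Fin (n + 1), (i : ℕ) + 1 < j → A i j = 0)
    (hA₁ : ∀ i j : Fin (n + 1), (i : ℕ) + 1 = j → A i j = 1) :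
    trace (matD D (gaugeMatrix D A) * (gaugeMatrix D A)⁻¹) = 0 := by
  have hB := isLowerTriangular_gaugeMatrix hD₀ hA₀
  let _ := (gaugeMatrix D A).invertibleOfIsUnitDet <| by
    rw [det_gaugeMatrix hD₀ hA₀ hA₁]
    exact isUnit_one
  refine trace_mul_eq_zero_of_isLowerTriangular (fun i j hij => ?_)
    (blockTriangular_inv_of_blockTriangular hB)
  rcases hij.lt_or_eq with hij | rfl
  · exact (congrArg D (hB hij)).trans hD₀
  · exact (congrArg D (gaugeRow_self hD₀ hA₀ hA₁ i i rfl)).trans hD₁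

end GaugeMatrix

/-- every matrix `A = A_Δ + h + N` (`A_Δ` with `1`'s on the superdiagonal, `h`
diagonal with trace zero, `N` strictly lower triangular) over a differential field `F` is
gauge equivalent over `GL_{l+1}(F)` to a trace-zero companion matrix with last row
`(f_1, …, f_l, 0)` for some `f_i ∈ F`. -/
theorem gauge_equivalent_to_companion (l : ℕ) (F : Type*) [Field F] (D : F → F)
    (hadd : ∀ a b : F, D (a + b) = D a + D b)
    (hmul : ∀ a b : F, D (a * b) = D a * b + a * D b)
    (A : Matrix (Fin (l + 1)) (Fin (l + 1)) F)
    (hupper : ∀ i j : Fin (l + 1), (i : ℕ) < (j : ℕ) →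
      A i j = if (i : ℕ) + 1 = (j : ℕ) then 1 else 0)
    (htrace : A.trace = 0) :
    ∃ B : Matrix (Fin (l + 1)) (Fin (l + 1)) F, IsUnit B.det ∧
      ∃ f : Fin l → F, B * A * B⁻¹ + matD D B * B⁻¹ = compMat0 l f := by
  have hD₀ : D 0 = 0 := by simpa using hadd 0 0
  have hD₁ : D 1 = 0 := by simpa using hmul 1 1
  have hA₀ : ∀ i j : Fin (l + 1), (i : ℕ) + 1 < j → A i j = 0 := fun i j h => by
    rw [hupper i j (by omega), if_neg h.ne]
  have hA₁ : ∀ i j : Fin (l + 1), (i : ℕ) + 1 = j → A i j = 1 := fun i j h => by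
    rw [hupper i j (by omega), if_pos h]
  have hB : IsUnit (gaugeMatrix D A).det := by
    rw [det_gaugeMatrix hD₀ hA₀ hA₁]
    exact isUnit_one
  have htr : trace (gaugeMatrix D A * A * (gaugeMatrix D A)⁻¹ +
      matD D (gaugeMatrix D A) * (gaugeMatrix D A)⁻¹) = 0 := by
    rw [trace_add, trace_conj ((isUnit_iff_isUnit_det _).mpr hB), htrace,
      trace_matD_gaugeMatrix_mul_inv hD₀ hD₁ hA₀ hA₁, add_zero]
  rw [← add_mul] at htr
  exact ⟨gaugeMatrix D A, hB, _, (add_mul _ _ _).symm.trans <|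
    eq_compMat0_of_trace_eq_zero (gaugeMatrix_mul_add_matD_mul_inv_apply_of_lt hB) htr⟩
end
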